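/- Suppose F̃ = F ∘ ψ̃ and p̃ = p ∘ ψ̃ for C¹ functions F, p : ℝ → ℝ (so the current function and the pressure are flux functions), and let p(x) = p̃(R(x), Z(x)). Then at any point x ∈ Ω where ∇ψ(x) ≠ 0, the ideal-MHD force balance μ₀ ∇p = (∇ × B) × B holds at x if and only if the Grad–Shafranov equation Δ*ψ̃ = −μ₀ R² p'(ψ̃) − F(ψ̃) F'(ψ̃) holds at (R(x), Z(x)), where Δ*ψ̃ := ∂²_R ψ̃ − (1/R) ∂_R ψ̃ + ∂²_Z ψ̃ = R² ∇·(∇ψ/R²) is the Grad–Shafranov operator. -/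

import Mathlib

/-- The cylindrical radius `R(x) = √(x₁² + x₂²)`. -/
noncomputable def Rcoord (x : EuclideanSpace ℝ (Fin 3)) : ℝ :=
  Real.sqrt ((x 0) ^ 2 + (x 1) ^ 2)

/-- Euclidean three-space minus the symmetry axis `{x₁ = x₂ = 0}`. -/
def offAxis : Set (EuclideanSpace ℝ (Fin 3)) := {x | ¬(x 0 = 0 ∧ x 1 = 0)}

/-- The gradient of the azimuthal angle, `∇φ(x) = (−x₂/R², x₁/R², 0)`. -/
noncomputable def gradPhi (x : EuclideanSpace ℝ (Fin 3)) : EuclideanSpace ℝ (Fin 3) :=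
  (WithLp.equiv 2 (Fin 3 → ℝ)).symm
    ![-(x 1) / ((x 0) ^ 2 + (x 1) ^ 2), (x 0) / ((x 0) ^ 2 + (x 1) ^ 2), 0]

/-- The cross product on Euclidean three-space. -/
noncomputable def cross3 (v w : EuclideanSpace ℝ (Fin 3)) : EuclideanSpace ℝ (Fin 3) :=
  (WithLp.equiv 2 (Fin 3 → ℝ)).symm
    ![v 1 * w 2 - v 2 * w 1, v 2 * w 0 - v 0 * w 2, v 0 * w 1 - v 1 * w 0]

/-- The curl `∇ × B` of a vector field on Euclidean three-space. -/
noncomputable def curl3 (B : EuclideanSpace ℝ (Fin 3) → EuclideanSpace ℝ (Fin 3))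
    (x : EuclideanSpace ℝ (Fin 3)) : EuclideanSpace ℝ (Fin 3) :=
  (WithLp.equiv 2 (Fin 3 → ℝ)).symm
    ![fderiv ℝ (fun y => B y 2) x (EuclideanSpace.single 1 1) -
        fderiv ℝ (fun y => B y 1) x (EuclideanSpace.single 2 1),
      fderiv ℝ (fun y => B y 0) x (EuclideanSpace.single 2 1) -
        fderiv ℝ (fun y => B y 2) x (EuclideanSpace.single 0 1),
      fderiv ℝ (fun y => B y 1) x (EuclideanSpace.single 0 1) -
        fderiv ℝ (fun y => B y 0) x (EuclideanSpace.single 1 1)]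

/-- The Grad–Shafranov operator
`Δ*ψ̃ = ∂²_R ψ̃ − (1/R) ∂_R ψ̃ + ∂²_Z ψ̃` acting on `ψ̃ : ℝ × ℝ → ℝ`. -/
noncomputable def gradShafranovOp (ψt : ℝ × ℝ → ℝ) (q : ℝ × ℝ) : ℝ :=
  fderiv ℝ (fun w => fderiv ℝ ψt w (1, 0)) q (1, 0) -
    (1 / q.1) * fderiv ℝ ψt q (1, 0) +
    fderiv ℝ (fun w => fderiv ℝ ψt w (0, 1)) q (0, 1)

/-!
Off the axis, `B = R u e_R + R v e_φ + w e_Z` with `u = ∂_Z ψ̃ / R²`, `v = F(ψ̃) / R²` and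
`w = −∂_R ψ̃ / R`; differentiating these components in `(R, Z)` gives
`∇ × B = Δ*ψ̃ ∇φ + F'(ψ̃) ∇ψ × ∇φ`. Since `∇φ ⊥ ∇ψ` and `|∇φ|² = 1/R²`, it follows that
`(∇ × B) × B = −(Δ*ψ̃ + F F'(ψ̃)) / R² · ∇ψ`, while `∇p = p'(ψ̃) ∇ψ` by the chain rule. As
`∇ψ ≠ 0`, force balance says that the two coefficients agree, which is the Grad–Shafranov
equation divided by `−R²`.
-/

open Set Filter Topology

local notation "E3" => EuclideanSpace ℝ (Fin 3)

lemma gradient_apply_eq_fderiv_single {ι : Type*} [Fintype ι] [DecidableEq ι]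
    (f : EuclideanSpace ℝ ι → ℝ) (x : EuclideanSpace ℝ ι) (i : ι) :
    gradient f x i = fderiv ℝ f x (EuclideanSpace.single i 1) := by
  rw [← inner_gradient_left, EuclideanSpace.inner_single_right]
  simp

lemma gradient_comp {E : Type*} [NormedAddCommGroup E] [InnerProductSpace ℝ E] [CompleteSpace E]
    {f : E → ℝ} {p : ℝ → ℝ} {x : E} (hp : DifferentiableAt ℝ p (f x))
    (hf : DifferentiableAt ℝ f x) :
    gradient (fun y => p (f y)) x = deriv p (f x) • gradient f x := by
  have h : HasFDerivAt (fun y => p (f y)) (deriv p (f x) • fderiv ℝ f x) x :=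
    hp.hasDerivAt.comp_hasFDerivAt x hf.hasFDerivAt
  rw [gradient, gradient, h.fderiv, map_smul]

lemma ContDiffAt.differentiableAt_fderiv_apply {𝕜 E F : Type*} [NontriviallyNormedField 𝕜]
    [NormedAddCommGroup E] [NormedSpace 𝕜 E] [NormedAddCommGroup F] [NormedSpace 𝕜 F]
    {g : E → F} {q : E} (hg : ContDiffAt 𝕜 2 g q) (v : E) :
    DifferentiableAt 𝕜 (fun p => fderiv 𝕜 g p v) q :=
  ((hg.fderiv_right (m := 1) le_rfl).differentiableAt one_ne_zero).clm_apply
    (differentiableAt_const v)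

lemma Filter.EventuallyEq.curl3_eq {B₁ B₂ : E3 → E3} {x : E3} (h : B₁ =ᶠ[𝓝 x] B₂) :
    curl3 B₁ x = curl3 B₂ x := by
  have hi : ∀ i, (fun y => B₁ y i) =ᶠ[𝓝 x] fun y => B₂ y i := fun i => h.mono fun y hy => by
    simp only [hy]
  simp only [curl3, (hi 0).fderiv_eq, (hi 1).fderiv_eq, (hi 2).fderiv_eq]

noncomputable def partialR (g : ℝ × ℝ → ℝ) (q : ℝ × ℝ) : ℝ := fderiv ℝ g q (1, 0)

noncomputable def partialZ (g : ℝ × ℝ → ℝ) (q : ℝ × ℝ) : ℝ := fderiv ℝ g q (0, 1)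

lemma HasFDerivAt.partialR_eq {g : ℝ × ℝ → ℝ} {g' : ℝ × ℝ →L[ℝ] ℝ} {q : ℝ × ℝ}
    (h : HasFDerivAt g g' q) : partialR g q = g' (1, 0) := by
  rw [partialR, h.fderiv]

lemma HasFDerivAt.partialZ_eq {g : ℝ × ℝ → ℝ} {g' : ℝ × ℝ →L[ℝ] ℝ} {q : ℝ × ℝ}
    (h : HasFDerivAt g g' q) : partialZ g q = g' (0, 1) := by
  rw [partialZ, h.fderiv]

lemma fderiv_apply_eq_partial (g : ℝ × ℝ → ℝ) (q v : ℝ × ℝ) :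
    fderiv ℝ g q v = v.1 * partialR g q + v.2 * partialZ g q := by
  have hv : v = v.1 • ((1 : ℝ), (0 : ℝ)) + v.2 • ((0 : ℝ), (1 : ℝ)) := by ext <;> simp
  rw [hv, map_add, map_smul, map_smul]
  simp [partialR, partialZ]

lemma gradShafranovOp_eq (ψt : ℝ × ℝ → ℝ) (q : ℝ × ℝ) :
    gradShafranovOp ψt q = partialR (partialR ψt) q - 1 / q.1 * partialR ψt q +
      partialZ (partialZ ψt) q := rfl

lemma partialR_neg (g : ℝ × ℝ → ℝ) (q : ℝ × ℝ) : partialR (fun p => -g p) q = -partialR g q := by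
  simp [partialR]

lemma partialR_comp {F : ℝ → ℝ} {g : ℝ × ℝ → ℝ} {q : ℝ × ℝ} (hF : DifferentiableAt ℝ F (g q))
    (hg : DifferentiableAt ℝ g q) : partialR (fun p => F (g p)) q = deriv F (g q) * partialR g q := by
  have h : HasFDerivAt (fun p => F (g p)) (deriv F (g q) • fderiv ℝ g q) q :=
    hF.hasDerivAt.comp_hasFDerivAt q hg.hasFDerivAt
  rw [h.partialR_eq]
  rfl

lemma partialZ_comp {F : ℝ → ℝ} {g : ℝ × ℝ → ℝ} {q : ℝ × ℝ} (hF : DifferentiableAt ℝ F (g q))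
    (hg : DifferentiableAt ℝ g q) : partialZ (fun p => F (g p)) q = deriv F (g q) * partialZ g q := by
  have h : HasFDerivAt (fun p => F (g p)) (deriv F (g q) • fderiv ℝ g q) q :=
    hF.hasDerivAt.comp_hasFDerivAt q hg.hasFDerivAt
  rw [h.partialZ_eq]
  rfl

lemma HasFDerivAt.div_comp_fst {g : ℝ × ℝ → ℝ} {g' : ℝ × ℝ →L[ℝ] ℝ} {h : ℝ → ℝ} {h' : ℝ}
    {q : ℝ × ℝ} (hg : HasFDerivAt g g' q) (hh : HasDerivAt h h' q.1) (hq : h q.1 ≠ 0) :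
    HasFDerivAt (fun p => g p / h p.1)
      ((h q.1 ^ 2)⁻¹ • (h q.1 • g' - (g q * h') • ContinuousLinearMap.fst ℝ ℝ ℝ)) q := by
  simp only [div_eq_mul_inv]
  refine (hg.mul ((hh.inv hq).comp_hasFDerivAt q hasFDerivAt_fst)).congr_fderiv ?_
  ext <;> simp <;> field_simp; ring

lemma DifferentiableAt.div_comp_fst {g : ℝ × ℝ → ℝ} {h : ℝ → ℝ} {q : ℝ × ℝ}
    (hg : DifferentiableAt ℝ g q) (hh : DifferentiableAt ℝ h q.1) (hq : h q.1 ≠ 0) :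
    DifferentiableAt ℝ (fun p => g p / h p.1) q :=
  (hg.hasFDerivAt.div_comp_fst hh.hasDerivAt hq).differentiableAt

lemma partialR_div_comp_fst {g : ℝ × ℝ → ℝ} {h : ℝ → ℝ} {h' : ℝ} {q : ℝ × ℝ}
    (hg : DifferentiableAt ℝ g q) (hh : HasDerivAt h h' q.1) (hq : h q.1 ≠ 0) :
    partialR (fun p => g p / h p.1) q = (partialR g q * h q.1 - g q * h') / h q.1 ^ 2 := by
  rw [(hg.hasFDerivAt.div_comp_fst hh hq).partialR_eq]
  simp [partialR]
  field_simp

lemma partialZ_div_comp_fst {g : ℝ × ℝ → ℝ} {h : ℝ → ℝ} {q : ℝ × ℝ}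
    (hg : DifferentiableAt ℝ g q) (hh : DifferentiableAt ℝ h q.1) (hq : h q.1 ≠ 0) :
    partialZ (fun p => g p / h p.1) q = partialZ g q / h q.1 := by
  rw [(hg.hasFDerivAt.div_comp_fst hh.hasDerivAt hq).partialZ_eq]
  simp [partialZ]
  field_simp

lemma sq_add_sq_pos_of_mem_offAxis {x : E3} (hx : x ∈ offAxis) : 0 < x 0 ^ 2 + x 1 ^ 2 := by
  rcases not_and_or.mp hx with h | h <;> positivity

lemma Rcoord_pos {x : E3} (hx : x ∈ offAxis) : 0 < Rcoord x :=
  Real.sqrt_pos.mpr (sq_add_sq_pos_of_mem_offAxis hx)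

lemma Rcoord_sq {x : E3} (hx : x ∈ offAxis) : Rcoord x ^ 2 = x 0 ^ 2 + x 1 ^ 2 :=
  Real.sq_sqrt (sq_add_sq_pos_of_mem_offAxis hx).le

lemma isOpen_offAxis : IsOpen offAxis := by
  have : offAxis = (fun x : E3 => x 0) ⁻¹' {0}ᶜ ∪ (fun x : E3 => x 1) ⁻¹' {0}ᶜ := by
    ext x; simp only [offAxis, mem_ofPred_eq, mem_union, mem_preimage, mem_compl_singleton_iff]
    tauto
  rw [this]
  exact (isOpen_compl_singleton.preimage (EuclideanSpace.proj 0).continuous).union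
    (isOpen_compl_singleton.preimage (EuclideanSpace.proj 1).continuous)

lemma hasFDerivAt_Rcoord {x : E3} (hx : x ∈ offAxis) :
    HasFDerivAt Rcoord ((x 0 / Rcoord x) • EuclideanSpace.proj 0 +
      (x 1 / Rcoord x) • EuclideanSpace.proj 1 : E3 →L[ℝ] ℝ) x := by
  have h0 := (EuclideanSpace.proj (𝕜 := ℝ) (0 : Fin 3)).hasFDerivAt (x := x)
  have h1 := (EuclideanSpace.proj (𝕜 := ℝ) (1 : Fin 3)).hasFDerivAt (x := x)
  refine (((h0.pow 2).add (h1.pow 2)).sqrt (sq_add_sq_pos_of_mem_offAxis hx).ne').congr_fderiv ?_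
  have hR : √(x 0 ^ 2 + x 1 ^ 2) ≠ 0 := (Rcoord_pos hx).ne'
  ext v
  simp [Rcoord]
  field_simp

lemma hasFDerivAt_cylCoords {x : E3} (hx : x ∈ offAxis) :
    HasFDerivAt (fun z : E3 => (Rcoord z, z 2))
      (((x 0 / Rcoord x) • EuclideanSpace.proj 0 + (x 1 / Rcoord x) • EuclideanSpace.proj 1 :
        E3 →L[ℝ] ℝ).prod (EuclideanSpace.proj 2)) x :=
  (hasFDerivAt_Rcoord hx).prodMk (EuclideanSpace.proj (𝕜 := ℝ) (2 : Fin 3)).hasFDerivAt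

lemma hasFDerivAt_comp_cylCoords {g : ℝ × ℝ → ℝ} {x : E3} (hx : x ∈ offAxis)
    (hg : DifferentiableAt ℝ g (Rcoord x, x 2)) :
    HasFDerivAt (fun z : E3 => g (Rcoord z, z 2))
      ((fderiv ℝ g (Rcoord x, x 2)).comp
        (((x 0 / Rcoord x) • EuclideanSpace.proj 0 + (x 1 / Rcoord x) • EuclideanSpace.proj 1 :
          E3 →L[ℝ] ℝ).prod (EuclideanSpace.proj 2))) x :=
  hg.hasFDerivAt.comp x (hasFDerivAt_cylCoords hx)

lemma fderiv_comp_cylCoords_apply {g : ℝ × ℝ → ℝ} {x : E3} (hx : x ∈ offAxis)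
    (hg : DifferentiableAt ℝ g (Rcoord x, x 2)) (v : E3) :
    fderiv ℝ (fun z : E3 => g (Rcoord z, z 2)) x v =
      (x 0 * v 0 + x 1 * v 1) / Rcoord x * partialR g (Rcoord x, x 2) +
        v 2 * partialZ g (Rcoord x, x 2) := by
  rw [(hasFDerivAt_comp_cylCoords hx hg).fderiv, ContinuousLinearMap.comp_apply,
    fderiv_apply_eq_partial]
  simp only [ContinuousLinearMap.prod_apply, add_apply,
    smul_apply, PiLp.proj_apply, smul_eq_mul]
  ring

lemma gradient_comp_cylCoords {g : ℝ × ℝ → ℝ} {x : E3} (hx : x ∈ offAxis)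
    (hg : DifferentiableAt ℝ g (Rcoord x, x 2)) :
    gradient (fun z : E3 => g (Rcoord z, z 2)) x = WithLp.toLp 2
      ![x 0 / Rcoord x * partialR g (Rcoord x, x 2), x 1 / Rcoord x * partialR g (Rcoord x, x 2),
        partialZ g (Rcoord x, x 2)] := by
  ext i
  rw [gradient_apply_eq_fderiv_single, fderiv_comp_cylCoords_apply hx hg]
  fin_cases i <;> simp

/-- In cylindrical coordinates, `cylField u v w = R u e_R + R v e_φ + w e_Z` with `u, v, w`
evaluated at `(R, Z)`. -/
noncomputable def cylField (u v w : ℝ × ℝ → ℝ) (z : E3) : E3 :=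
  WithLp.toLp 2 ![z 0 * u (Rcoord z, z 2) - z 1 * v (Rcoord z, z 2),
    z 1 * u (Rcoord z, z 2) + z 0 * v (Rcoord z, z 2), w (Rcoord z, z 2)]

theorem curl3_cylField {u v w : ℝ × ℝ → ℝ} {x : E3} (hx : x ∈ offAxis)
    (hu : DifferentiableAt ℝ u (Rcoord x, x 2)) (hv : DifferentiableAt ℝ v (Rcoord x, x 2))
    (hw : DifferentiableAt ℝ w (Rcoord x, x 2)) :
    curl3 (cylField u v w) x = WithLp.toLp 2
      ![x 1 / Rcoord x * partialR w (Rcoord x, x 2) - x 1 * partialZ u (Rcoord x, x 2) -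
          x 0 * partialZ v (Rcoord x, x 2),
        x 0 * partialZ u (Rcoord x, x 2) - x 1 * partialZ v (Rcoord x, x 2) -
          x 0 / Rcoord x * partialR w (Rcoord x, x 2),
        2 * v (Rcoord x, x 2) + Rcoord x * partialR v (Rcoord x, x 2)] := by
  have hx0 := (EuclideanSpace.proj (𝕜 := ℝ) (0 : Fin 3)).hasFDerivAt (x := x)
  have hx1 := (EuclideanSpace.proj (𝕜 := ℝ) (1 : Fin 3)).hasFDerivAt (x := x)
  have hu' := hasFDerivAt_comp_cylCoords hx hu
  have hv' := hasFDerivAt_comp_cylCoords hx hv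
  have hB0 : HasFDerivAt (fun z => cylField u v w z 0) _ x := (hx0.mul hu').sub (hx1.mul hv')
  have hB1 : HasFDerivAt (fun z => cylField u v w z 1) _ x := (hx1.mul hu').add (hx0.mul hv')
  have hB2 : HasFDerivAt (fun z => cylField u v w z 2) _ x := hasFDerivAt_comp_cylCoords hx hw
  have hR : Rcoord x ≠ 0 := (Rcoord_pos hx).ne'
  have hR2 := Rcoord_sq hx
  ext i
  simp only [curl3, hB0.fderiv, hB1.fderiv, hB2.fderiv]
  fin_cases i <;> simp [fderiv_apply_eq_partial]
  · ring
  · field_simp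
    linear_combination -partialR v (Rcoord x, x 2) * hR2

noncomputable def axisymField (ψt G : ℝ × ℝ → ℝ) (z : E3) : E3 :=
  cross3 (gradPhi z) (gradient (fun y : E3 => ψt (Rcoord y, y 2)) z) + G (Rcoord z, z 2) • gradPhi z

lemma axisymField_eq_cylField {ψt G : ℝ × ℝ → ℝ} {z : E3} (hz : z ∈ offAxis)
    (hψ : DifferentiableAt ℝ ψt (Rcoord z, z 2)) :
    axisymField ψt G z = cylField (fun q => partialZ ψt q / q.1 ^ 2) (fun q => G q / q.1 ^ 2)
      (fun q => -partialR ψt q / q.1) z := by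
  have hR : Rcoord z ≠ 0 := (Rcoord_pos hz).ne'
  have hR2 := Rcoord_sq hz
  ext i
  fin_cases i <;> simp [axisymField, cylField, cross3, gradPhi, gradient_comp_cylCoords hz hψ, ← hR2]
  · ring
  · field_simp
  · field_simp
    rw [hR2]
    ring

lemma axisymField_eventuallyEq_cylField {ψt G : ℝ × ℝ → ℝ} {x : E3}
    (hψ : ContDiffAt ℝ 1 ψt (Rcoord x, x 2)) (hx : x ∈ offAxis) :
    axisymField ψt G =ᶠ[𝓝 x] cylField (fun q => partialZ ψt q / q.1 ^ 2)
      (fun q => G q / q.1 ^ 2) (fun q => -partialR ψt q / q.1) := by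
  filter_upwards [isOpen_offAxis.mem_nhds hx,
    (hasFDerivAt_cylCoords hx).continuousAt.eventually (hψ.eventually (by simp))] with z hz hψz
  exact axisymField_eq_cylField hz (hψz.differentiableAt one_ne_zero)

theorem curl3_axisymField {ψt : ℝ × ℝ → ℝ} {F : ℝ → ℝ} {x : E3}
    (hψ : ContDiffAt ℝ 2 ψt (Rcoord x, x 2)) (hF : DifferentiableAt ℝ F (ψt (Rcoord x, x 2)))
    (hx : x ∈ offAxis) :
    curl3 (axisymField ψt fun q => F (ψt q)) x =
      gradShafranovOp ψt (Rcoord x, x 2) • gradPhi x + deriv F (ψt (Rcoord x, x 2)) •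
        cross3 (gradient (fun z : E3 => ψt (Rcoord z, z 2)) x) (gradPhi x) := by
  have hR : Rcoord x ≠ 0 := (Rcoord_pos hx).ne'
  have hψ' : DifferentiableAt ℝ ψt (Rcoord x, x 2) := hψ.differentiableAt two_ne_zero
  have hψR : DifferentiableAt ℝ (partialR ψt) (Rcoord x, x 2) := hψ.differentiableAt_fderiv_apply _
  have hψZ : DifferentiableAt ℝ (partialZ ψt) (Rcoord x, x 2) := hψ.differentiableAt_fderiv_apply _
  have hFψ : DifferentiableAt ℝ (fun q => F (ψt q)) (Rcoord x, x 2) := hF.comp _ hψ'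
  have hψR' : DifferentiableAt ℝ (fun q => -partialR ψt q) (Rcoord x, x 2) := hψR.neg
  have hR2 : (Rcoord x, x 2).1 ^ 2 ≠ 0 := pow_ne_zero 2 hR
  rw [(axisymField_eventuallyEq_cylField (hψ.of_le one_le_two) hx).curl3_eq,
    curl3_cylField hx (hψZ.div_comp_fst (differentiableAt_pow 2) hR2)
      (hFψ.div_comp_fst (differentiableAt_pow 2) hR2)
      (hψR'.div_comp_fst differentiableAt_fun_id hR),
    partialZ_div_comp_fst hψZ (differentiableAt_pow 2) hR2,
    partialZ_div_comp_fst hFψ (differentiableAt_pow 2) hR2, partialZ_comp hF hψ',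
    partialR_div_comp_fst hFψ (hasDerivAt_pow 2 _) hR2, partialR_comp hF hψ',
    partialR_div_comp_fst hψR' (hasDerivAt_id' _) hR, partialR_neg,
    gradient_comp_cylCoords hx hψ']
  ext i
  fin_cases i <;> simp [cross3, gradPhi, gradShafranovOp_eq, ← Rcoord_sq hx] <;> field_simp
  · ring
  · ring
  · linear_combination deriv F (ψt (Rcoord x, x 2)) * partialR ψt (Rcoord x, x 2) * Rcoord_sq hx

theorem cross3_curl3_axisymField {ψt : ℝ × ℝ → ℝ} {F : ℝ → ℝ} {x : E3}
    (hψ : ContDiffAt ℝ 2 ψt (Rcoord x, x 2)) (hF : DifferentiableAt ℝ F (ψt (Rcoord x, x 2)))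
    (hx : x ∈ offAxis) :
    cross3 (curl3 (axisymField ψt fun q => F (ψt q)) x) (axisymField ψt (fun q => F (ψt q)) x) =
      -((gradShafranovOp ψt (Rcoord x, x 2) + F (ψt (Rcoord x, x 2)) * deriv F (ψt (Rcoord x, x 2)))
        / Rcoord x ^ 2) • gradient (fun z : E3 => ψt (Rcoord z, z 2)) x := by
  have hR : Rcoord x ≠ 0 := (Rcoord_pos hx).ne'
  rw [curl3_axisymField hψ hF hx, axisymField,
    gradient_comp_cylCoords hx (hψ.differentiableAt two_ne_zero)]
  generalize gradShafranovOp ψt (Rcoord x, x 2) = Δ, partialR ψt (Rcoord x, x 2) = a,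
    partialZ ψt (Rcoord x, x 2) = b, F (ψt (Rcoord x, x 2)) = f, deriv F (ψt (Rcoord x, x 2)) = f'
  ext i
  fin_cases i <;> simp [cross3, gradPhi, ← Rcoord_sq hx] <;> field_simp
  · linear_combination a * x 0 * (Δ + f * f') * Rcoord_sq hx
  · linear_combination a * x 1 * (Δ + f * f') * Rcoord_sq hx
  · linear_combination b * (Δ + f * f') * Rcoord_sq hx

theorem force_balance_iff_grad_shafranov_general
    (μ₀ : ℝ)
    (ψt Ft pt : ℝ × ℝ → ℝ)
    (hψt : ContDiffOn ℝ 3 ψt (Set.Ioi (0 : ℝ) ×ˢ Set.univ))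
    (F p : ℝ → ℝ) (hF1 : ContDiff ℝ 1 F) (hp1 : ContDiff ℝ 1 p)
    (hFflux : Ft = fun w => F (ψt w))
    (hpflux : pt = fun w => p (ψt w))
    (ψ Ffun pfun : EuclideanSpace ℝ (Fin 3) → ℝ)
    (hψ : ψ = fun x => ψt (Rcoord x, x 2))
    (hFfun : Ffun = fun x => Ft (Rcoord x, x 2))
    (hpfun : pfun = fun x => pt (Rcoord x, x 2))
    (B : EuclideanSpace ℝ (Fin 3) → EuclideanSpace ℝ (Fin 3))
    (hB : B = fun x => cross3 (gradPhi x) (gradient ψ x) + Ffun x • gradPhi x) :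
    ∀ x ∈ offAxis, gradient ψ x ≠ 0 →
      (μ₀ • gradient pfun x = cross3 (curl3 B x) (B x) ↔
        gradShafranovOp ψt (Rcoord x, x 2) =
          -μ₀ * (Rcoord x) ^ 2 * deriv p (ψt (Rcoord x, x 2)) -
            F (ψt (Rcoord x, x 2)) * deriv F (ψt (Rcoord x, x 2))) := by
  intro x hx hgrad
  have hB' : B = axisymField ψt fun q => F (ψt q) := by subst hB hFfun hFflux hψ; rfl
  have hp' : pfun = fun z => p (ψt (Rcoord z, z 2)) := by rw [hpfun, hpflux]
  subst hB' hp' hψ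
  have hψx : ContDiffAt ℝ 3 ψt (Rcoord x, x 2) :=
    hψt.contDiffAt (prod_mem_nhds (Ioi_mem_nhds (Rcoord_pos hx)) univ_mem)
  have hψ : DifferentiableAt ℝ (fun z : E3 => ψt (Rcoord z, z 2)) x :=
    (hasFDerivAt_comp_cylCoords hx (hψx.differentiableAt (by norm_num))).differentiableAt
  have hR : Rcoord x ≠ 0 := (Rcoord_pos hx).ne'
  rw [cross3_curl3_axisymField (hψx.of_le (by norm_num)) (hF1.differentiable one_ne_zero _) hx,
    gradient_comp (hp1.differentiable one_ne_zero _) hψ, smul_smul,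
    (smul_left_injective ℝ hgrad).eq_iff]
  field_simp
  constructor <;> intro h <;> linarith

/-- **Force balance is equivalent to the Grad–Shafranov equation.**
If the current function and the pressure are flux functions, `F̃ = F ∘ ψ̃` and
`p̃ = p ∘ ψ̃`, then at any point `x ∈ Ω` with `∇ψ(x) ≠ 0` the ideal-MHD force
balance `μ₀ ∇p = (∇ × B) × B` holds at `x` iff the Grad–Shafranov equation
`Δ*ψ̃ = −μ₀ R² p'(ψ̃) − F(ψ̃) F'(ψ̃)` holds at `(R(x), Z(x))`. -/
theorem force_balance_iff_grad_shafranov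
    (μ₀ : ℝ) (hμ₀ : 0 < μ₀)
    (ψt Ft pt : ℝ × ℝ → ℝ)
    (hψt : ContDiffOn ℝ 3 ψt (Set.Ioi (0 : ℝ) ×ˢ Set.univ))
    (hFt : ContDiffOn ℝ 2 Ft (Set.Ioi (0 : ℝ) ×ˢ Set.univ))
    (F p : ℝ → ℝ) (hF1 : ContDiff ℝ 1 F) (hp1 : ContDiff ℝ 1 p)
    (hFflux : Ft = fun w => F (ψt w))
    (hpflux : pt = fun w => p (ψt w))
    (ψ Ffun pfun : EuclideanSpace ℝ (Fin 3) → ℝ)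
    (hψ : ψ = fun x => ψt (Rcoord x, x 2))
    (hFfun : Ffun = fun x => Ft (Rcoord x, x 2))
    (hpfun : pfun = fun x => pt (Rcoord x, x 2))
    (B : EuclideanSpace ℝ (Fin 3) → EuclideanSpace ℝ (Fin 3))
    (hB : B = fun x => cross3 (gradPhi x) (gradient ψ x) + Ffun x • gradPhi x) :
    ∀ x ∈ offAxis, gradient ψ x ≠ 0 →
      (μ₀ • gradient pfun x = cross3 (curl3 B x) (B x) ↔
        gradShafranovOp ψt (Rcoord x, x 2) =
          -μ₀ * (Rcoord x) ^ 2 * deriv p (ψt (Rcoord x, x 2)) -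
            F (ψt (Rcoord x, x 2)) * deriv F (ψt (Rcoord x, x 2))) :=
  force_balance_iff_grad_shafranov_general μ₀ ψt Ft pt hψt F p hF1 hp1 hFflux hpflux ψ Ffun pfun hψ
    hFfun hpfun B hB
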